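/- arXiv:1312.6973 — 6 statements merged into one kernel-verified Lean document; each statement's English description precedes it below -/
import Mathlib

section
/- (Motzkin–Straus) If G is a graph on n vertices whose largest clique has order t, then the maximum of λ(G, x) = Σ_{ij ∈ E(G)} x_i x_j over the standard simplex equals (1/2)(1 - 1/t). -/
open Finset

def stdSimplex' (n : ℕ) : Set (Fin n → ℝ) :=
  {x | (∀ i, 0 ≤ x i) ∧ ∑ i, x i = 1}

/-! The uniform vector on a maximum clique attains `(1 - 1/t)/2`. For the upper bound, induct on a
set `S` containing the support of `x`. If `S` is a clique, the Lagrangian equals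
`((∑ x)² - ∑ x²)/2 ≤ (1 - 1/|S|)/2` by Cauchy–Schwarz. Otherwise `S` contains non-adjacent
vertices `i ≠ j`; as no edge contains both, the Lagrangian is affine along `eᵢ - eⱼ`, so moving the
whole mass of one of them onto the other does not decrease it, and shrinks the support into a
proper subset of `S`. -/

theorem Finset.sq_sum_eq_sum_sq_add_two_mul_sum_powersetCard_two {α R : Type*} [DecidableEq α]
    [CommSemiring R] (s : Finset α) (x : α → R) :
    (∑ i ∈ s, x i) ^ 2 = ∑ i ∈ s, x i ^ 2 + 2 * ∑ e ∈ s.powersetCard 2, ∏ i ∈ e, x i := by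
  induction s using Finset.induction_on with
  | empty => simp [powersetCard_eq_empty.2 (show #(∅ : Finset α) < 2 by simp)]
  | insert a s ha ih =>
    have hpairs : ∑ e ∈ (s.powersetCard 1).image (insert a), ∏ i ∈ e, x i =
        x a * ∑ i ∈ s, x i := by
      rw [powersetCard_one, map_eq_image, image_image, sum_image, mul_sum]
      · refine sum_congr rfl fun i hi => ?_
        simp [prod_pair (ne_of_mem_of_not_mem hi ha).symm]
      · intro i hi j hj hij
        have : i ∈ ({a, j} : Finset α) := by
          change ({a, i} : Finset α) = {a, j} at hij
          simp [← hij]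
        simpa [ne_of_mem_of_not_mem (mem_coe.1 hi) ha] using this
    have hdisj : Disjoint (s.powersetCard 2) ((s.powersetCard 1).image (insert a)) := by
      refine disjoint_left.2 fun e he he' => ha ?_
      obtain ⟨t, -, rfl⟩ := mem_image.1 he'
      exact (mem_powersetCard.1 he).1 (mem_insert_self a t)
    rw [powersetCard_succ_insert ha, sum_union hdisj, hpairs, sum_insert ha, sum_insert ha,
      add_sq, ih]
    ring

namespace MotzkinStraus

variable {V : Type*} {E : Finset (Finset V)}

def lagrangian (E : Finset (Finset V)) (x : V → ℝ) : ℝ :=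
  ∑ e ∈ E, ∏ i ∈ e, x i

theorem two_mul_lagrangian_of_isClique [DecidableEq V] (hE : ∀ e ∈ E, #e = 2) {S : Finset V}
    (hS : S.powersetCard 2 ⊆ E) {x : V → ℝ} (hxS : ∀ i ∉ S, x i = 0) :
    2 * lagrangian E x = (∑ i ∈ S, x i) ^ 2 - ∑ i ∈ S, x i ^ 2 := by
  have hrestrict : lagrangian E x = ∑ e ∈ S.powersetCard 2, ∏ i ∈ e, x i := by
    refine (sum_subset hS fun e he heS => ?_).symm
    obtain ⟨i, hie, hiS⟩ := not_subset.1 fun h => heS (mem_powersetCard.2 ⟨h, hE e he⟩)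
    exact prod_eq_zero hie (hxS i hiS)
  rw [hrestrict, sq_sum_eq_sum_sq_add_two_mul_sum_powersetCard_two]
  ring

theorem lagrangian_le_of_isClique [Fintype V] [DecidableEq V] (hE : ∀ e ∈ E, #e = 2)
    {S : Finset V} (hS : S.powersetCard 2 ⊆ E) {x : V → ℝ} (hx : x ∈ stdSimplex ℝ V)
    (hxS : ∀ i ∉ S, x i = 0) {t : ℕ} (hSt : #S ≤ t) :
    lagrangian E x ≤ 1 / 2 * (1 - 1 / t) := by
  have hsum : ∑ i ∈ S, x i = 1 := (sum_subset (subset_univ S) fun i _ hi => hxS i hi).trans hx.2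
  have hcard : (0 : ℝ) < #S := by
    rcases S.eq_empty_or_nonempty with rfl | hne
    · simp at hsum
    · exact_mod_cast hne.card_pos
  have hcs := sq_sum_le_card_mul_sum_sq (s := S) (f := x)
  have hval := two_mul_lagrangian_of_isClique hE hS hxS
  rw [hsum] at hcs hval
  have hsq : 1 / (#S : ℝ) ≤ ∑ i ∈ S, x i ^ 2 := by
    rw [div_le_iff₀ hcard]
    linarith
  have ht : 1 / (t : ℝ) ≤ 1 / #S := one_div_le_one_div_of_le hcard (by exact_mod_cast hSt)
  linarith

theorem exists_lagrangian_add_smul [DecidableEq V] (hE : ∀ e ∈ E, #e = 2) {d : V → ℝ}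
    (hd : ∀ a b, a ≠ b → {a, b} ∈ E → d a * d b = 0) (x : V → ℝ) :
    ∃ D, ∀ c : ℝ, lagrangian E (x + c • d) = lagrangian E x + c * D := by
  have hedge : ∀ e ∈ E, ∃ De, ∀ c : ℝ, ∏ i ∈ e, (x + c • d) i = ∏ i ∈ e, x i + c * De := by
    intro e he
    obtain ⟨a, b, hab, rfl⟩ := card_eq_two.1 (hE e he)
    refine ⟨d a * x b + x a * d b, fun c => ?_⟩
    simp only [prod_pair hab, Pi.add_apply, Pi.smul_apply, smul_eq_mul]
    linear_combination c ^ 2 * hd a b hab he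
  choose! De hDe using hedge
  exact ⟨∑ e ∈ E, De e, fun c => by
    simp only [lagrangian, sum_congr rfl fun e he => hDe e he c, sum_add_distrib, mul_sum]⟩

theorem single_sub_single_mul_eq_zero [DecidableEq V] {i j : V} (hij : {i, j} ∉ E) {a b : V}
    (hab : a ≠ b) (he : {a, b} ∈ E) :
    (Pi.single i 1 - Pi.single j 1 : V → ℝ) a * (Pi.single i 1 - Pi.single j 1 : V → ℝ) b = 0 := by
  have hsupp : ∀ k, (Pi.single i 1 - Pi.single j 1 : V → ℝ) k ≠ 0 → k ∈ ({i, j} : Finset V) := by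
    intro k hk
    contrapose! hk
    simp_all
  by_contra h
  obtain ⟨ha, hb⟩ := mul_ne_zero_iff.1 h
  have hsub : {a, b} ⊆ ({i, j} : Finset V) := insert_subset (hsupp a ha) (by simpa using hsupp b hb)
  refine hij (eq_of_subset_of_card_le hsub ?_ ▸ he)
  rw [card_pair hab]
  exact card_le_two

theorem le_lagrangian_add_smul_single_sub_single_or [DecidableEq V] (hE : ∀ e ∈ E, #e = 2) {i j : V}
    (hij : {i, j} ∉ E) {x : V → ℝ} (hx : ∀ k, 0 ≤ x k) :
    lagrangian E x ≤ lagrangian E (x + x j • (Pi.single i 1 - Pi.single j 1)) ∨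
      lagrangian E x ≤ lagrangian E (x + x i • (Pi.single j 1 - Pi.single i 1)) := by
  obtain ⟨D, hD⟩ := exists_lagrangian_add_smul hE
    (fun _ _ hab he => single_sub_single_mul_eq_zero hij hab he) x
  have hswap : x + x i • (Pi.single j 1 - Pi.single i 1 : V → ℝ) =
      x + (-x i) • (Pi.single i 1 - Pi.single j 1) := by
    rw [neg_smul, ← smul_neg, neg_sub]
  rw [hswap, hD, hD]
  rcases le_total 0 D with hD0 | hD0
  · exact Or.inl (le_add_of_nonneg_right (mul_nonneg (hx j) hD0))
  · exact Or.inr (le_add_of_nonneg_right (by nlinarith [hx i]))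

theorem add_smul_single_sub_single_mem_stdSimplex [Fintype V] [DecidableEq V] {x : V → ℝ}
    (hx : x ∈ stdSimplex ℝ V) {i j : V} (hij : i ≠ j) :
    x + x j • (Pi.single i 1 - Pi.single j 1) ∈ stdSimplex ℝ V := by
  refine ⟨fun k => ?_, ?_⟩
  · rcases eq_or_ne k i with rfl | hki
    · simp [hij, add_nonneg (hx.1 k) (hx.1 j)]
    rcases eq_or_ne k j with rfl | hkj
    · simp [hki]
    · simp [hki, hkj, hx.1 k]
  · simp [sum_add_distrib, ← mul_sum, sum_sub_distrib, hx.2]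

theorem add_smul_single_sub_single_eq_zero_of_notMem [DecidableEq V] {S : Finset V}
    {x : V → ℝ} (hxS : ∀ k ∉ S, x k = 0) {i j : V} (hi : i ∈ S) (hij : i ≠ j) {k : V}
    (hk : k ∉ S.erase j) :
    (x + x j • (Pi.single i 1 - Pi.single j 1) : V → ℝ) k = 0 := by
  rcases eq_or_ne k j with rfl | hkj
  · simp [hij]
  · have hkS : k ∉ S := fun h => hk (mem_erase.2 ⟨hkj, h⟩)
    simp [hxS k hkS, ne_of_mem_of_not_mem hi hkS |>.symm, hkj]

theorem lagrangian_le_of_forall_clique_card_le [Fintype V] [DecidableEq V]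
    (hE : ∀ e ∈ E, #e = 2) {t : ℕ} (hmax : ∀ W : Finset V, W.powersetCard 2 ⊆ E → #W ≤ t)
    (S : Finset V) : ∀ x ∈ stdSimplex ℝ V, (∀ k ∉ S, x k = 0) →
      lagrangian E x ≤ 1 / 2 * (1 - 1 / t) := by
  induction S using Finset.strongInduction with
  | H S ih =>
  intro x hx hxS
  by_cases hS : S.powersetCard 2 ⊆ E
  · exact lagrangian_le_of_isClique hE hS hx hxS (hmax S hS)
  · obtain ⟨i, hi, j, hj, hij, hnadj⟩ : ∃ i ∈ S, ∃ j ∈ S, i ≠ j ∧ {i, j} ∉ E := by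
      obtain ⟨e, he, heE⟩ := not_subset.1 hS
      obtain ⟨heS, he2⟩ := mem_powersetCard.1 he
      obtain ⟨i, j, hij, rfl⟩ := card_eq_two.1 he2
      exact ⟨i, heS (by simp), j, heS (by simp), hij, heE⟩
    rcases le_lagrangian_add_smul_single_sub_single_or hE hnadj hx.1 with h | h
    · exact h.trans <| ih _ (erase_ssubset hj) _
        (add_smul_single_sub_single_mem_stdSimplex hx hij)
        fun k hk => add_smul_single_sub_single_eq_zero_of_notMem hxS hi hij hk
    · exact h.trans <| ih _ (erase_ssubset hi) _
        (add_smul_single_sub_single_mem_stdSimplex hx hij.symm)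
        fun k hk => add_smul_single_sub_single_eq_zero_of_notMem hxS hj hij.symm hk

theorem uniform_mem_stdSimplex [Fintype V] [DecidableEq V] {W : Finset V} (hW : W.Nonempty) :
    (fun i => if i ∈ W then (#W : ℝ)⁻¹ else 0) ∈ stdSimplex ℝ V := by
  refine ⟨fun i => by positivity, ?_⟩
  simp [sum_ite_mem, hW.card_pos.ne']

theorem lagrangian_uniform_of_isClique [DecidableEq V] (hE : ∀ e ∈ E, #e = 2) {W : Finset V}
    (hW : W.powersetCard 2 ⊆ E) (hne : W.Nonempty) :
    lagrangian E (fun i => if i ∈ W then (#W : ℝ)⁻¹ else 0) = 1 / 2 * (1 - 1 / #W) := by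
  have hval := two_mul_lagrangian_of_isClique hE hW (x := fun i => if i ∈ W then (#W : ℝ)⁻¹ else 0)
    fun i hi => if_neg hi
  rw [sum_ite_of_true fun _ h => h, sum_apply_ite_of_true _ _ (· ^ 2) fun _ h => h] at hval
  simp only [sum_const, nsmul_eq_mul] at hval
  have hcard : (#W : ℝ) ≠ 0 := by exact_mod_cast hne.card_pos.ne'
  field_simp at hval ⊢
  linarith

end MotzkinStraus

open MotzkinStraus in
/-- Motzkin–Straus: a graph is given by its finset of 2-element edge sets;
a largest clique (set all of whose pairs are edges) has order `t`. -/
theorem stmt_1 (n t : ℕ) (hn : 1 ≤ n) (E : Finset (Finset (Fin n)))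
    (hE : ∀ e ∈ E, e.card = 2)
    (hcl : ∃ W : Finset (Fin n), W.card = t ∧ W.powersetCard 2 ⊆ E)
    (hmax : ∀ W : Finset (Fin n), W.powersetCard 2 ⊆ E → W.card ≤ t) :
    IsGreatest {y : ℝ | ∃ x ∈ stdSimplex' n, y = ∑ e ∈ E, ∏ i ∈ e, x i}
      (1 / 2 * (1 - 1 / (t : ℝ))) := by
  obtain ⟨W, rfl, hW⟩ := hcl
  have hne : W.Nonempty := card_pos.1 <| hmax {⟨0, hn⟩} (by simp [powersetCard_eq_empty.2])
  refine ⟨⟨_, uniform_mem_stdSimplex hne, (lagrangian_uniform_of_isClique hE hW hne).symm⟩, ?_⟩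
  rintro _ ⟨x, hx, rfl⟩
  exact lagrangian_le_of_forall_clique_card_le hE hmax univ x hx (by simp)
end

section
/- In the Motzkin–Straus setting, if G is a graph with clique number t and K is a fixed clique of order t, then the vector x with x_i = 1/t for i ∈ K and x_i = 0 otherwise achieves the maximum λ(G) = (1/2)(1 - 1/t) of λ(G, ·) over the standard simplex. -/
/-!
If the support `s` of `x ∈ S` is a clique, then `λ(G, x)` is at most the sum over all pairs
of `s`, which equals `((∑ x)² - ∑ x²) / 2 ≤ (1 - 1/|s|) / 2` by Cauchy–Schwarz. Otherwise pick
non-adjacent `i, j` in the support: no edge contains both, so `λ(G, ·)` is affine in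
`(x_i, x_j)`, and moving the whole weight of one of them onto the other does not decrease it
while shrinking the support. On a maximum clique `K` the uniform vector attains equality in
Cauchy–Schwarz.
-/

open Finset

section

variable {ι : Type*}

def lagrangian (E : Finset (Finset ι)) (x : ι → ℝ) : ℝ :=
  ∑ e ∈ E, ∏ i ∈ e, x i

variable [DecidableEq ι]

theorem two_mul_lagrangian_powersetCard_two (s : Finset ι) (x : ι → ℝ) :
    2 * lagrangian (s.powersetCard 2) x = (∑ i ∈ s, x i) ^ 2 - ∑ i ∈ s, x i ^ 2 := by
  induction s using Finset.induction with
  | empty => simp [lagrangian, powersetCard_eq_empty.2 (by simp : #(∅ : Finset ι) < 2)]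
  | @insert a s ha ih =>
    have hdisj : Disjoint (s.powersetCard 2) ((s.powersetCard 1).image (insert a)) := by
      simp only [disjoint_left, mem_image, mem_powersetCard, not_exists, not_and]
      exact fun e he e' _ he' => ha (he.1 (he' ▸ mem_insert_self a e'))
    have hinj : Set.InjOn (insert a) (s.powersetCard 1 : Set (Finset ι)) := by
      intro e he e' he' hee
      simp only [mem_coe, mem_powersetCard] at he he'
      rw [← erase_insert (fun h => ha (he.1 h)), ← erase_insert (fun h => ha (he'.1 h)), hee]
    have hpairs : ∑ e ∈ (s.powersetCard 1).image (insert a), ∏ i ∈ e, x i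
        = x a * ∑ i ∈ s, x i := by
      rw [sum_image hinj, powersetCard_one, sum_map, mul_sum]
      refine sum_congr rfl fun i hi => ?_
      rw [Function.Embedding.coeFn_mk, prod_pair (ne_of_mem_of_not_mem hi ha).symm]
    rw [lagrangian] at ih ⊢
    rw [powersetCard_succ_insert ha, sum_union hdisj, hpairs, sum_insert ha, sum_insert ha]
    linear_combination ih

theorem lagrangian_powersetCard_two_le {s : Finset ι} {x : ι → ℝ}
    (hs : ∑ i ∈ s, x i = 1) :
    lagrangian (s.powersetCard 2) x ≤ 1 / 2 * (1 - 1 / #s) := by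
  have hcs := sq_sum_le_card_mul_sum_sq (s := s) (f := x)
  rw [hs, one_pow] at hcs
  have hcard : (0 : ℝ) < #s := by
    exact_mod_cast card_pos.2 (nonempty_of_sum_ne_zero (hs ▸ one_ne_zero))
  have hsq : 1 / (#s : ℝ) ≤ ∑ i ∈ s, x i ^ 2 := by
    rw [div_le_iff₀ hcard]; linarith
  have := two_mul_lagrangian_powersetCard_two s x
  rw [hs] at this
  linarith

theorem lagrangian_eq_filter_subset (E : Finset (Finset ι)) {s : Finset ι} {x : ι → ℝ}
    (hxs : ∀ i ∉ s, x i = 0) :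
    lagrangian E x = lagrangian (E.filter (· ⊆ s)) x := by
  refine (sum_filter_of_ne fun e _ he i hi => ?_).symm
  by_contra his
  exact he (prod_eq_zero hi (hxs i his))

theorem lagrangian_le_powersetCard_two {E : Finset (Finset ι)} (hE : ∀ e ∈ E, #e = 2)
    {s : Finset ι} {x : ι → ℝ} (hx : ∀ i, 0 ≤ x i) (hxs : ∀ i ∉ s, x i = 0) :
    lagrangian E x ≤ lagrangian (s.powersetCard 2) x := by
  rw [lagrangian_eq_filter_subset E hxs]
  refine sum_le_sum_of_subset_of_nonneg (fun e he => ?_) fun e _ _ => prod_nonneg fun i _ => hx i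
  rw [mem_filter] at he
  exact mem_powersetCard.2 ⟨he.2, hE e he.1⟩

theorem lagrangian_eq_powersetCard_two {E : Finset (Finset ι)} (hE : ∀ e ∈ E, #e = 2)
    {s : Finset ι} (hs : s.powersetCard 2 ⊆ E) {x : ι → ℝ} (hxs : ∀ i ∉ s, x i = 0) :
    lagrangian E x = lagrangian (s.powersetCard 2) x := by
  rw [lagrangian_eq_filter_subset E hxs]
  congr 1
  ext e
  simp only [mem_filter, mem_powersetCard]
  exact ⟨fun h => ⟨h.2, hE e h.1⟩, fun h => ⟨hs (mem_powersetCard.2 h), h.1⟩⟩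

theorem lagrangian_clique_indicator {E : Finset (Finset ι)} (hE : ∀ e ∈ E, #e = 2)
    {K : Finset ι} (hK : K.Nonempty) (hKE : K.powersetCard 2 ⊆ E) :
    lagrangian E (fun i => if i ∈ K then 1 / #K else 0) = 1 / 2 * (1 - 1 / #K) := by
  set u : ι → ℝ := fun i => if i ∈ K then 1 / #K else 0
  have hu : ∀ i ∈ K, u i = 1 / #K := fun i hi => if_pos hi
  have hcard : (#K : ℝ) ≠ 0 := by exact_mod_cast hK.card_pos.ne'
  have h2 := two_mul_lagrangian_powersetCard_two K u
  rw [sum_congr rfl hu, sum_congr rfl fun i hi => congrArg (· ^ 2) (hu i hi), sum_const,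
    sum_const, nsmul_eq_mul, nsmul_eq_mul, mul_one_div_cancel hcard] at h2
  rw [lagrangian_eq_powersetCard_two hE hKE fun i hi => if_neg hi]
  field_simp at h2 ⊢
  linarith

theorem prod_eq_affine_of_not_pair_subset {e : Finset ι} {i j : ι} (hij : ¬(i ∈ e ∧ j ∈ e))
    {x u : ι → ℝ} (hu : ∀ m, m ≠ i → m ≠ j → u m = x m) :
    ∏ m ∈ e, u m = u i * (if i ∈ e then ∏ m ∈ e.erase i, x m else 0)
      + u j * (if j ∈ e then ∏ m ∈ e.erase j, x m else 0)
      + (if i ∈ e ∨ j ∈ e then 0 else ∏ m ∈ e, x m) := by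
  by_cases hi : i ∈ e
  · have hj : j ∉ e := fun hj => hij ⟨hi, hj⟩
    rw [if_pos hi, if_neg hj, if_pos (Or.inl hi), ← mul_prod_erase e u hi]
    have : ∏ m ∈ e.erase i, u m = ∏ m ∈ e.erase i, x m := prod_congr rfl fun m hm =>
      hu m (ne_of_mem_erase hm) fun h => hj (h ▸ mem_of_mem_erase hm)
    rw [this]; ring
  by_cases hj : j ∈ e
  · rw [if_neg hi, if_pos hj, if_pos (Or.inr hj), ← mul_prod_erase e u hj]
    have : ∏ m ∈ e.erase j, u m = ∏ m ∈ e.erase j, x m := prod_congr rfl fun m hm =>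
      hu m (fun h => hi (h ▸ mem_of_mem_erase hm)) (ne_of_mem_erase hm)
    rw [this]; ring
  rw [if_neg hi, if_neg hj, if_neg (not_or.2 ⟨hi, hj⟩)]
  have : ∏ m ∈ e, u m = ∏ m ∈ e, x m := prod_congr rfl fun m hm =>
    hu m (fun h => hi (h ▸ hm)) (fun h => hj (h ▸ hm))
  rw [this]; ring

theorem exists_lagrangian_eq_affine {E : Finset (Finset ι)} (hE : ∀ e ∈ E, #e = 2)
    {i j : ι} (hij : i ≠ j) (hijE : {i, j} ∉ E) (x : ι → ℝ) :
    ∃ A B C : ℝ, ∀ u : ι → ℝ, (∀ m, m ≠ i → m ≠ j → u m = x m) →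
      lagrangian E u = u i * A + u j * B + C := by
  have hnot : ∀ e ∈ E, ¬(i ∈ e ∧ j ∈ e) := by
    rintro e he ⟨hi, hj⟩
    have hpair : {i, j} ⊆ e := insert_subset hi (singleton_subset_iff.2 hj)
    rw [eq_of_subset_of_card_le hpair (by rw [hE e he, card_pair hij])] at hijE
    exact hijE he
  refine ⟨∑ e ∈ E, if i ∈ e then ∏ m ∈ e.erase i, x m else 0,
    ∑ e ∈ E, if j ∈ e then ∏ m ∈ e.erase j, x m else 0,
    ∑ e ∈ E, if i ∈ e ∨ j ∈ e then 0 else ∏ m ∈ e, x m, fun u hu => ?_⟩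
  rw [lagrangian, sum_congr rfl fun e he => prod_eq_affine_of_not_pair_subset (hnot e he) hu,
    sum_add_distrib, sum_add_distrib, ← mul_sum, ← mul_sum]

def moveWeight (x : ι → ℝ) (i j : ι) : ι → ℝ :=
  x + Pi.single i (x j) - Pi.single j (x j)

section moveWeight

variable {x : ι → ℝ} {i j : ι}

theorem moveWeight_apply_left (hij : i ≠ j) : moveWeight x i j i = x i + x j := by
  simp [moveWeight, hij]

theorem moveWeight_apply_right (hij : i ≠ j) : moveWeight x i j j = 0 := by
  simp [moveWeight, hij.symm]

theorem moveWeight_apply_of_ne {m : ι} (hmi : m ≠ i) (hmj : m ≠ j) :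
    moveWeight x i j m = x m := by
  simp [moveWeight, hmi, hmj]

theorem moveWeight_mem_stdSimplex [Fintype ι] (hij : i ≠ j) (hx : x ∈ stdSimplex ℝ ι) :
    moveWeight x i j ∈ stdSimplex ℝ ι := by
  refine ⟨fun m => ?_, ?_⟩
  · rcases eq_or_ne m i with rfl | hmi
    · rw [moveWeight_apply_left hij]; exact add_nonneg (hx.1 _) (hx.1 _)
    rcases eq_or_ne m j with rfl | hmj
    · rw [moveWeight_apply_right hij]
    · rw [moveWeight_apply_of_ne hmi hmj]; exact hx.1 m
  · simp [moveWeight, sum_add_distrib, sum_sub_distrib, hx.2]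

theorem moveWeight_eq_zero_of_notMem_erase {s : Finset ι} (hij : i ≠ j) (hi : i ∈ s)
    (hxs : ∀ m ∉ s, x m = 0) {m : ι} (hm : m ∉ s.erase j) : moveWeight x i j m = 0 := by
  rcases eq_or_ne m j with rfl | hmj
  · exact moveWeight_apply_right hij
  have hms : m ∉ s := fun h => hm (mem_erase.2 ⟨hmj, h⟩)
  rw [moveWeight_apply_of_ne (ne_of_mem_of_not_mem hi hms).symm hmj, hxs m hms]

end moveWeight

theorem lagrangian_le_moveWeight_or {E : Finset (Finset ι)} (hE : ∀ e ∈ E, #e = 2)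
    {i j : ι} (hij : i ≠ j) (hijE : {i, j} ∉ E) {x : ι → ℝ} (hi : 0 ≤ x i)
    (hj : 0 ≤ x j) :
    lagrangian E x ≤ lagrangian E (moveWeight x i j) ∨
      lagrangian E x ≤ lagrangian E (moveWeight x j i) := by
  obtain ⟨A, B, C, hL⟩ := exists_lagrangian_eq_affine hE hij hijE x
  rw [hL x fun _ _ _ => rfl, hL _ fun m => moveWeight_apply_of_ne,
    hL _ fun m hmi hmj => moveWeight_apply_of_ne hmj hmi, moveWeight_apply_left hij,
    moveWeight_apply_right hij, moveWeight_apply_left hij.symm, moveWeight_apply_right hij.symm]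
  rcases le_total B A with hBA | hAB
  · left; nlinarith
  · right; nlinarith

theorem lagrangian_le_of_clique_card_le [Fintype ι] {E : Finset (Finset ι)}
    (hE : ∀ e ∈ E, #e = 2) {t : ℕ}
    (hmax : ∀ W : Finset ι, W.powersetCard 2 ⊆ E → #W ≤ t) (s : Finset ι) {x : ι → ℝ}
    (hx : x ∈ stdSimplex ℝ ι) (hxs : ∀ m ∉ s, x m = 0) :
    lagrangian E x ≤ 1 / 2 * (1 - 1 / t) := by
  induction s using Finset.strongInduction generalizing x with
  | H s ih =>
    by_cases hcl : s.powersetCard 2 ⊆ E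
    · have hs : ∑ m ∈ s, x m = 1 := by
        rw [← hx.2]; exact sum_subset (subset_univ s) fun m _ hm => hxs m hm
      have hcard : (0 : ℝ) < #s := by
        exact_mod_cast card_pos.2 (nonempty_of_sum_ne_zero (hs ▸ one_ne_zero))
      have hst : 1 / (t : ℝ) ≤ 1 / #s :=
        one_div_le_one_div_of_le hcard (by exact_mod_cast hmax s hcl)
      calc lagrangian E x ≤ lagrangian (s.powersetCard 2) x :=
            lagrangian_le_powersetCard_two hE hx.1 hxs
        _ ≤ 1 / 2 * (1 - 1 / #s) := lagrangian_powersetCard_two_le hs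
        _ ≤ 1 / 2 * (1 - 1 / t) := by linarith
    · obtain ⟨e, hes, heE⟩ := not_subset.1 hcl
      obtain ⟨i, j, hij, rfl⟩ := card_eq_two.1 (mem_powersetCard.1 hes).2
      have hi : i ∈ s := (mem_powersetCard.1 hes).1 (mem_insert_self i {j})
      have hj : j ∈ s := (mem_powersetCard.1 hes).1 (mem_insert_of_mem (mem_singleton_self j))
      rcases lagrangian_le_moveWeight_or hE hij heE (hx.1 i) (hx.1 j) with h | h
      · exact h.trans <| ih _ (erase_ssubset hj) (moveWeight_mem_stdSimplex hij hx)
          fun m => moveWeight_eq_zero_of_notMem_erase hij hi hxs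
      · exact h.trans <| ih _ (erase_ssubset hi) (moveWeight_mem_stdSimplex hij.symm hx)
          fun m => moveWeight_eq_zero_of_notMem_erase hij.symm hj hxs

end

/-- The uniform weighting on a fixed maximum clique `K` achieves the
Motzkin–Straus maximum `(1/2)(1 - 1/t)`. -/
theorem stmt_2 (n t : ℕ) (ht : 1 ≤ t) (E : Finset (Finset (Fin n)))
    (hE : ∀ e ∈ E, e.card = 2)
    (K : Finset (Fin n)) (hK : K.card = t) (hKcl : K.powersetCard 2 ⊆ E)
    (hmax : ∀ W : Finset (Fin n), W.powersetCard 2 ⊆ E → W.card ≤ t) :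
    (∑ e ∈ E, ∏ i ∈ e, (fun i => if i ∈ K then (1 : ℝ) / t else 0) i
        = 1 / 2 * (1 - 1 / (t : ℝ))) ∧
    (∀ x ∈ stdSimplex' n, (∑ e ∈ E, ∏ i ∈ e, x i) ≤ 1 / 2 * (1 - 1 / (t : ℝ))) := by
  subst hK
  exact ⟨lagrangian_clique_indicator hE (card_pos.1 ht) hKcl,
    fun x hx => lagrangian_le_of_clique_card_le hE hmax univ hx
      fun m hm => absurd (mem_univ m) hm⟩
end

section
/- If H is a {1,2}-graph on n vertices whose maximum complete {1,2}-subgraph has order t ≥ 2, then λ'(H) = 2 - 1/t, attained by putting weight 1/t on each vertex of a fixed maximum complete {1,2}-subgraph and 0 elsewhere. -/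
open Finset

/-! The edges of size two contribute at most `∑_{i<j} x i * x j = (1 - ∑ x i ^ 2) / 2`. If the
weighted vertices of `E1` span a complete `{1,2}`-subgraph, there are at most `t` of them, and
Cauchy–Schwarz bounds the Lagrangian by `s + 1 - s ^ 2 / t ≤ 2 - 1 / t`, where `s ≤ 1` is their
total weight. Otherwise two of them, `i` and `j`, lie in no common edge, so the Lagrangian is
affine along `x + s • (eᵢ - eⱼ)`; one endpoint of that segment has a smaller support and no
smaller value, and induction on the size of the support concludes. -/

namespace Finset

variable {ι R : Type*} [DecidableEq ι] [CommRing R]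

theorem two_mul_sum_powersetCard_two_prod (s : Finset ι) (x : ι → R) :
    2 * ∑ e ∈ s.powersetCard 2, ∏ i ∈ e, x i = (∑ i ∈ s, x i) ^ 2 - ∑ i ∈ s, x i ^ 2 := by
  induction s using Finset.induction_on with
  | empty => rw [powersetCard_eq_empty.2 (by simp)]; simp
  | insert a s ha ih =>
    have hne : ∀ b ∈ s, a ≠ b := fun b hb hab => ha (hab ▸ hb)
    have hinj : Set.InjOn (fun b => ({a, b} : Finset ι)) s := by
      intro b hb c _ hbc
      have hb' : b ∈ ({a, c} : Finset ι) := by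
        rw [← show ({a, b} : Finset ι) = {a, c} from hbc]
        exact mem_insert_of_mem (mem_singleton_self b)
      exact mem_singleton.1 ((mem_insert.1 hb').resolve_left (hne b hb).symm)
    have hdisj : Disjoint (s.powersetCard 2) (s.image fun b => {a, b}) := by
      refine disjoint_left.2 fun e he he' => ?_
      obtain ⟨b, -, rfl⟩ := mem_image.1 he'
      exact ha ((mem_powersetCard.1 he).1 (mem_insert_self a _))
    have hnew : (s.powersetCard 1).image (insert a) = s.image fun b => {a, b} := by
      rw [powersetCard_one, map_eq_image, image_image]
      rfl
    rw [powersetCard_succ_insert ha, hnew, sum_union hdisj, sum_image hinj,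
      sum_congr rfl fun b hb => prod_pair (hne b hb), ← mul_sum, sum_insert ha, sum_insert ha,
      mul_add, ih]
    ring

theorem prod_add_mul_eq_of_forall_ne {e : Finset ι} {d : ι → R} (a : ι)
    (hd : ∀ b ∈ e, b ≠ a → d b = 0) (x : ι → R) (s : R) :
    ∏ i ∈ e, (x i + s * d i) = ∏ i ∈ e, x i + s * ∑ b ∈ e, d b * ∏ i ∈ e.erase b, x i := by
  by_cases ha : a ∈ e
  · have herase : ∀ i ∈ e.erase a, x i + s * d i = x i := fun i hi => by
      rw [hd i (mem_of_mem_erase hi) (ne_of_mem_erase hi), mul_zero, add_zero]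
    rw [← mul_prod_erase e _ ha, prod_congr rfl herase, ← mul_prod_erase e x ha,
      sum_eq_single_of_mem a ha fun b hb hba => by rw [hd b hb hba, zero_mul]]
    ring
  · have hd' : ∀ b ∈ e, d b = 0 := fun b hb => hd b hb fun hba => ha (hba ▸ hb)
    rw [prod_congr rfl fun i hi => by rw [hd' i hi, mul_zero, add_zero],
      sum_eq_zero fun b hb => by rw [hd' b hb, zero_mul], mul_zero, add_zero]

end Finset

namespace OneTwoGraph

variable {ι : Type*} [DecidableEq ι] {E1 : Finset ι} {E2 : Finset (Finset ι)}

def lagrangian (E1 : Finset ι) (E2 : Finset (Finset ι)) (x : ι → ℝ) : ℝ :=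
  ∑ i ∈ E1, x i + 2 * ∑ e ∈ E2, ∏ i ∈ e, x i

noncomputable def uniformWeight (W : Finset ι) : ι → ℝ :=
  fun i => if i ∈ W then (1 : ℝ) / #W else 0

theorem lagrangian_add_smul {d : ι → ℝ} (hd : ∀ e ∈ E2, ∃ a, ∀ b ∈ e, b ≠ a → d b = 0)
    (x : ι → ℝ) (s : ℝ) :
    lagrangian E1 E2 (x + s • d) = lagrangian E1 E2 x +
      s * (∑ i ∈ E1, d i + 2 * ∑ e ∈ E2, ∑ b ∈ e, d b * ∏ i ∈ e.erase b, x i) := by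
  have hedge : ∀ e ∈ E2, ∏ i ∈ e, (x + s • d) i =
      ∏ i ∈ e, x i + s * ∑ b ∈ e, d b * ∏ i ∈ e.erase b, x i := fun e he => by
    obtain ⟨a, ha⟩ := hd e he
    exact prod_add_mul_eq_of_forall_ne a ha x s
  unfold lagrangian
  rw [sum_congr rfl hedge, sum_add_distrib, ← mul_sum]
  simp only [Pi.add_apply, Pi.smul_apply, smul_eq_mul]
  rw [sum_add_distrib, ← mul_sum]
  ring

theorem lagrangian_uniformWeight (hE2 : ∀ e ∈ E2, #e = 2) {W : Finset ι} (hW : W.Nonempty)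
    (hW1 : W ⊆ E1) (hW2 : W.powersetCard 2 ⊆ E2) :
    lagrangian E1 E2 (uniformWeight W) = 2 - 1 / #W := by
  have hcard : (#W : ℝ) ≠ 0 := Nat.cast_ne_zero.2 hW.card_ne_zero
  have hlin : ∑ i ∈ E1, uniformWeight W i = 1 := by
    simp [uniformWeight, sum_ite_mem, inter_eq_right.2 hW1, hcard]
  have hquad : ∑ e ∈ E2, ∏ i ∈ e, uniformWeight W i =
      ∑ e ∈ W.powersetCard 2, ∏ i ∈ e, uniformWeight W i := by
    refine (sum_subset hW2 fun e he heW => ?_).symm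
    obtain ⟨i, hie, hiW⟩ := not_subset.1 fun h => heW (mem_powersetCard.2 ⟨h, hE2 e he⟩)
    exact prod_eq_zero hie (if_neg hiW)
  have hW' : ∀ i ∈ W, uniformWeight W i = 1 / #W := fun i hi => if_pos hi
  have hsq : ∑ i ∈ W, uniformWeight W i ^ 2 = #W * (1 / #W) ^ 2 := by
    rw [sum_congr rfl fun i hi => congrArg (· ^ 2) (hW' i hi), sum_const, nsmul_eq_mul]
  unfold lagrangian
  rw [hlin, hquad, two_mul_sum_powersetCard_two_prod, sum_congr rfl hW', sum_const, nsmul_eq_mul,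
    hsq]
  field_simp
  ring

section Fintype

variable [Fintype ι]

theorem two_mul_sum_prod_le_one_sub_sum_sq (hE2 : ∀ e ∈ E2, #e = 2) {x : ι → ℝ}
    (hx : x ∈ stdSimplex ℝ ι) :
    2 * ∑ e ∈ E2, ∏ i ∈ e, x i ≤ 1 - ∑ i, x i ^ 2 := by
  have hsub : E2 ⊆ univ.powersetCard 2 := fun e he =>
    mem_powersetCard.2 ⟨subset_univ e, hE2 e he⟩
  calc 2 * ∑ e ∈ E2, ∏ i ∈ e, x i ≤ 2 * ∑ e ∈ univ.powersetCard 2, ∏ i ∈ e, x i := by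
        gcongr
        exact fun e _ _ => prod_nonneg fun i _ => hx.1 i
    _ = 1 - ∑ i, x i ^ 2 := by rw [two_mul_sum_powersetCard_two_prod, hx.2, one_pow]

theorem lagrangian_le_of_card_filter_le (hE2 : ∀ e ∈ E2, #e = 2) {t : ℕ} (ht : 2 ≤ t)
    {x : ι → ℝ} (hx : x ∈ stdSimplex ℝ ι) (hcard : #{i ∈ E1 | x i ≠ 0} ≤ t) :
    lagrangian E1 E2 x ≤ 2 - 1 / t := by
  set s := ∑ i ∈ E1, x i
  have ht' : (2 : ℝ) ≤ t := by exact_mod_cast ht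
  have hs0 : 0 ≤ s := sum_nonneg fun i _ => hx.1 i
  have hs1 : s ≤ 1 := hx.2 ▸ sum_le_sum_of_subset_of_nonneg (subset_univ E1) fun i _ _ => hx.1 i
  have hCS : s ^ 2 ≤ t * ∑ i, x i ^ 2 :=
    calc s ^ 2 = (∑ i ∈ E1 with x i ≠ 0, x i) ^ 2 := by rw [sum_filter_ne_zero]
      _ ≤ (#{i ∈ E1 | x i ≠ 0} : ℝ) * ∑ i ∈ E1 with x i ≠ 0, x i ^ 2 := sq_sum_le_card_mul_sum_sq
      _ ≤ t * ∑ i, x i ^ 2 := mul_le_mul (by exact_mod_cast hcard)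
          (sum_le_sum_of_subset_of_nonneg (subset_univ _) fun i _ _ => sq_nonneg (x i))
          (sum_nonneg fun i _ => sq_nonneg (x i)) (Nat.cast_nonneg t)
  have hquad := two_mul_sum_prod_le_one_sub_sum_sq hE2 hx
  -- `s + 1 - s ^ 2 / t ≤ 2 - 1 / t` is `(1 - s) * (t - 1 - s) ≥ 0`
  have hfac : 0 ≤ (1 - s) * (t - 1 - s) := mul_nonneg (by linarith) (by linarith)
  rw [le_sub_iff_add_le, ← le_sub_iff_add_le', div_le_iff₀ (by linarith)]
  unfold lagrangian
  nlinarith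

variable {x : ι → ℝ} {i j : ι}

theorem add_smul_single_sub_single_mem_stdSimplex (hx : x ∈ stdSimplex ℝ ι) (hij : i ≠ j) :
    x + x j • (Pi.single i 1 - Pi.single j 1) ∈ stdSimplex ℝ ι := by
  refine ⟨fun k => ?_, ?_⟩
  · rcases eq_or_ne k j with rfl | hkj
    · simp [hij]
    rcases eq_or_ne k i with rfl | hki
    · simpa [hkj] using add_nonneg (hx.1 k) (hx.1 j)
    · simpa [hki, hkj] using hx.1 k
  · simp [sum_add_distrib, ← mul_sum, hx.2]

theorem card_support_add_smul_single_sub_single_lt (hij : i ≠ j) (hxi : x i ≠ 0)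
    (hxj : x j ≠ 0) :
    #{k | (x + x j • (Pi.single i 1 - Pi.single j 1) : ι → ℝ) k ≠ 0} < #{k | x k ≠ 0} := by
  have hsub : ({k | (x + x j • (Pi.single i 1 - Pi.single j 1) : ι → ℝ) k ≠ 0} : Finset ι) ⊆
      ({k | x k ≠ 0} : Finset ι).erase j := by
    intro k hk
    rcases eq_or_ne k j with rfl | hkj
    · simp [hij] at hk
    rcases eq_or_ne k i with rfl | hki
    · simp [hkj, hxi]
    · simpa [Pi.single_apply, hki, hkj] using hk
  exact (card_le_card hsub).trans_lt (card_erase_lt_of_mem (by simpa using hxj))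

theorem exists_lagrangian_le_card_support_lt (hij : i ≠ j) (hE : ∀ e ∈ E2, ¬(i ∈ e ∧ j ∈ e))
    (hx : x ∈ stdSimplex ℝ ι) (hxi : x i ≠ 0) (hxj : x j ≠ 0) :
    ∃ y ∈ stdSimplex ℝ ι, lagrangian E1 E2 x ≤ lagrangian E1 E2 y ∧
      #{k | y k ≠ 0} < #{k | x k ≠ 0} := by
  set d : ι → ℝ := Pi.single i 1 - Pi.single j 1
  have hd : ∀ e ∈ E2, ∃ a, ∀ b ∈ e, b ≠ a → d b = 0 := by
    intro e he
    by_cases hie : i ∈ e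
    · refine ⟨i, fun b hb hbi => ?_⟩
      have hbj : b ≠ j := fun h => hE e he ⟨hie, h ▸ hb⟩
      simp [d, hbi, hbj]
    · refine ⟨j, fun b hb hbj => ?_⟩
      have hbi : b ≠ i := fun h => hie (h ▸ hb)
      simp [d, hbi, hbj]
  obtain ⟨c, hc⟩ : ∃ c, ∀ s : ℝ, lagrangian E1 E2 (x + s • d) = lagrangian E1 E2 x + s * c :=
    ⟨_, lagrangian_add_smul hd x⟩
  rcases le_total 0 c with hc0 | hc0
  · refine ⟨x + x j • d, add_smul_single_sub_single_mem_stdSimplex hx hij, ?_,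
      card_support_add_smul_single_sub_single_lt hij hxi hxj⟩
    rw [hc]
    nlinarith [hx.1 j]
  · have hswap : x + (-x i) • d = x + x i • (Pi.single j 1 - Pi.single i 1) := by
      rw [neg_smul, ← smul_neg, neg_sub]
    refine ⟨x + (-x i) • d, hswap ▸ add_smul_single_sub_single_mem_stdSimplex hx hij.symm, ?_,
      hswap ▸ card_support_add_smul_single_sub_single_lt hij.symm hxj hxi⟩
    rw [hc]
    nlinarith [hx.1 i]

theorem lagrangian_le_of_forall_card_le (hE2 : ∀ e ∈ E2, #e = 2) {t : ℕ} (ht : 2 ≤ t)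
    (hmax : ∀ U ⊆ E1, U.powersetCard 2 ⊆ E2 → #U ≤ t) (hx : x ∈ stdSimplex ℝ ι) :
    lagrangian E1 E2 x ≤ 2 - 1 / t := by
  induction hm : #{k | x k ≠ 0} using Nat.strong_induction_on generalizing x with
  | _ m ih =>
  by_cases hU : {k ∈ E1 | x k ≠ 0}.powersetCard 2 ⊆ E2
  · exact lagrangian_le_of_card_filter_le hE2 ht hx (hmax _ (filter_subset _ _) hU)
  obtain ⟨p, hpU, hpE2⟩ := not_subset.1 hU
  obtain ⟨hpsub, hpcard⟩ := mem_powersetCard.1 hpU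
  obtain ⟨i, j, hij, rfl⟩ := card_eq_two.1 hpcard
  have hxi := (mem_filter.1 (hpsub (mem_insert_self i _))).2
  have hxj := (mem_filter.1 (hpsub (mem_insert_of_mem (mem_singleton_self j)))).2
  have hE : ∀ e ∈ E2, ¬(i ∈ e ∧ j ∈ e) := fun e he ⟨hie, hje⟩ => hpE2 <|
    (eq_of_subset_of_card_le (insert_subset hie (singleton_subset_iff.2 hje))
      (by rw [hE2 e he, card_pair hij])) ▸ he
  obtain ⟨y, hy, hxy, hcard⟩ := exists_lagrangian_le_card_support_lt hij hE hx hxi hxj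
  exact hxy.trans (ih _ (hm ▸ hcard) hy rfl)

theorem uniformWeight_mem_stdSimplex {W : Finset ι} (hW : W.Nonempty) :
    uniformWeight W ∈ stdSimplex ℝ ι := by
  refine ⟨fun i => ?_, ?_⟩
  · unfold uniformWeight
    split_ifs <;> positivity
  · simp [uniformWeight, sum_ite_mem, hW.card_ne_zero]

end Fintype

end OneTwoGraph

/-- If `H` is a `{1,2}`-graph whose maximum complete `{1,2}`-subgraph has order `t ≥ 2`,
then `λ'(H) = 2 - 1/t`, attained by uniform weights on a fixed maximum complete
`{1,2}`-subgraph `W`. -/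
theorem stmt_4 (n t : ℕ) (ht : 2 ≤ t)
    (E1 : Finset (Fin n)) (E2 : Finset (Finset (Fin n)))
    (hE2 : ∀ e ∈ E2, e.card = 2)
    (W : Finset (Fin n)) (hW : W.card = t) (hW1 : W ⊆ E1)
    (hW2 : W.powersetCard 2 ⊆ E2)
    (hmax : ∀ U : Finset (Fin n), U ⊆ E1 → U.powersetCard 2 ⊆ E2 → U.card ≤ t) :
    IsGreatest {y : ℝ | ∃ x ∈ stdSimplex' n,
        y = (∑ i ∈ E1, x i) + 2 * ∑ e ∈ E2, ∏ i ∈ e, x i} (2 - 1 / (t : ℝ)) ∧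
    ((∑ i ∈ E1, (fun i => if i ∈ W then (1 : ℝ) / t else 0) i)
        + 2 * ∑ e ∈ E2, ∏ i ∈ e, (fun i => if i ∈ W then (1 : ℝ) / t else 0) i)
      = 2 - 1 / (t : ℝ) := by
  subst hW
  have hW : W.Nonempty := card_pos.1 (by omega)
  have hval := OneTwoGraph.lagrangian_uniformWeight hE2 hW hW1 hW2
  refine ⟨⟨⟨_, OneTwoGraph.uniformWeight_mem_stdSimplex hW, hval.symm⟩, ?_⟩, hval⟩
  rintro y ⟨x, hx, rfl⟩
  exact OneTwoGraph.lagrangian_le_of_forall_card_le hE2 ht hmax hx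
end

section
/- Let α_r > 0 and let H be a {2,r}-graph such that both the order of its maximum complete {2,r}-subgraph and the number of vertices covered by H^2 equal t, where t ≥ α_r/(r-2)! + 1. Then the maximum over the standard simplex of L(H,x) = Σ_{ij ∈ E(H^2)} x_i x_j + α_r Σ_{e ∈ E(H^r)} Π_{i∈e} x_i equals (t-1)/(2t) + α_r Π_{i=1}^{r-1}(t-i)/(r! t^{r-1}). -/
/-!
The 2-edges cover only `t` vertices and a complete `{2,r}`-subgraph `W` has `t` vertices, so the
2-edges are exactly the pairs of `W`. Let `x` lie in the simplex with mass `s` on `W`. Maclaurin's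
inequality bounds the pair part by `C(t,2) (s/t)^2`, and splitting an `r`-set into its parts inside
and outside `W` bounds the elementary symmetric sum `e_r(x)` by
`∑_{k+l=r} C(t,k) (s/t)^k (1-s)^l / l!`. Write `C(t,k)/t^k = B_k/k!` with
`B_k = t(t-1)⋯(t-k+1)/t^k`. The sequence `B_k + C(k,2)/t` is nondecreasing, so the second factorial
moment of the binomial distribution gives `e_r(x) ≤ C(t,r)/t^r + C(r,2)(1-s^2)/(t r!)`. When
`α_r ≤ (t-1)(r-2)!` this excess is paid for by the deficit `(t-1)(1-s^2)/(2t)` of the pair part, and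
the uniform weight on `W` attains the bound.
-/

open Finset

lemma mul_pow_le_mean_pow {u v : ℝ} (hu : 0 ≤ u) (hv : 0 ≤ v) (k : ℕ) :
    v * u ^ k ≤ ((v + k * u) / (k + 1)) ^ (k + 1) := by
  rcases hu.eq_or_lt with rfl | hu
  · cases k with
    | zero => simp
    | succ k => simp only [zero_pow k.succ_ne_zero, mul_zero, add_zero]; positivity
  have ha : -2 ≤ (v - u) / ((k + 1) * u) := by
    have : -1 ≤ (v - u) / ((k + 1) * u) := by
      rw [le_div_iff₀ (by positivity)]
      nlinarith [(k.cast_nonneg : (0 : ℝ) ≤ k)]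
    linarith
  calc v * u ^ k = u ^ (k + 1) * (1 + ((k + 1 : ℕ) : ℝ) * ((v - u) / ((k + 1) * u))) := by
        push_cast
        field_simp
        ring
    _ ≤ u ^ (k + 1) * (1 + (v - u) / ((k + 1) * u)) ^ (k + 1) := by
        gcongr
        exact one_add_mul_le_pow ha (k + 1)
    _ = ((v + k * u) / (k + 1)) ^ (k + 1) := by
        rw [← mul_pow]
        congr 1
        field_simp
        ring

lemma choose_mul_pow_add_le {m j : ℕ} {u a : ℝ} (hu : 0 ≤ u) (ha : 0 ≤ a) :
    m.choose (j + 1) * u ^ (j + 1) + m.choose j * a * u ^ j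
      ≤ (m + 1).choose (j + 1) * ((a + m * u) / (m + 1)) ^ (j + 1) := by
  rcases lt_or_ge m j with hmj | hjm
  · rw [Nat.choose_eq_zero_of_lt hmj, Nat.choose_eq_zero_of_lt (by omega)]
    simp only [Nat.cast_zero, zero_mul, add_zero]
    positivity
  have hpascal₁ : ((m + 1).choose (j + 1) : ℝ) * (j + 1) = (m + 1) * m.choose j := by
    exact_mod_cast (Nat.add_one_mul_choose_eq m j).symm
  have hpascal₂ : ((m + 1).choose (j + 1) : ℝ) * (m - j) = (m + 1) * m.choose (j + 1) := by
    rw [← Nat.cast_sub hjm]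
    exact_mod_cast by simpa [mul_comm] using (Nat.choose_mul_succ_eq m (j + 1)).symm
  set v : ℝ := ((m - j) * u + (j + 1) * a) / (m + 1) with hv_def
  have hv : 0 ≤ v := by
    have : (j : ℝ) ≤ m := by exact_mod_cast hjm
    apply div_nonneg _ (by positivity)
    nlinarith
  calc (m.choose (j + 1) : ℝ) * u ^ (j + 1) + m.choose j * a * u ^ j
      = (m + 1).choose (j + 1) * (v * u ^ j) := by
        rw [div_mul_eq_mul_div, mul_div_assoc', eq_div_iff (by positivity)]
        linear_combination (-u ^ (j + 1)) * hpascal₂ - (a * u ^ j) * hpascal₁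
    _ ≤ (m + 1).choose (j + 1) * ((v + j * u) / (j + 1)) ^ (j + 1) := by
        gcongr
        exact mul_pow_le_mean_pow hu hv j
    _ = (m + 1).choose (j + 1) * ((a + m * u) / (m + 1)) ^ (j + 1) := by
        rw [show (v + j * u) / (j + 1) = (a + m * u) / (m + 1) by rw [hv_def]; field_simp; ring]

section Binomial

variable {R : Type*} [CommSemiring R]

lemma sum_antidiagonal_choose_mul_pow (a b : R) (n : ℕ) :
    ∑ p ∈ antidiagonal n, (n.choose p.1 : R) * a ^ p.1 * b ^ p.2 = (a + b) ^ n := by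
  rw [(Commute.all a b).add_pow']
  exact sum_congr rfl fun p _ => by rw [nsmul_eq_mul, mul_assoc]

lemma sum_antidiagonal_choose_two_mul_choose_mul_pow (a b : R) (n : ℕ) :
    ∑ p ∈ antidiagonal n, (p.1.choose 2 : R) * n.choose p.1 * a ^ p.1 * b ^ p.2
      = n.choose 2 * a ^ 2 * (a + b) ^ (n - 2) := by
  rcases n with _ | _ | n
  · simp
  · simp [Nat.sum_antidiagonal_succ]
  have hchoose (k : ℕ) :
      (k + 1 + 1).choose 2 * (n + 1 + 1).choose (k + 1 + 1) = (n + 1 + 1).choose 2 * n.choose k := by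
    simpa [mul_comm] using Nat.choose_mul (n := n + 2) (k := k + 2) (s := 2) (by omega)
  rw [Nat.sum_antidiagonal_succ, Nat.sum_antidiagonal_succ, ← sum_antidiagonal_choose_mul_pow,
    mul_sum]
  simp only [Nat.choose_zero_succ, Nat.cast_zero, zero_mul, zero_add,
    show Nat.choose 1 2 = 0 from rfl, show n + 1 + 1 - 2 = n from rfl]
  refine sum_congr rfl fun p _ => ?_
  rw [← Nat.cast_mul, hchoose, Nat.cast_mul]
  ring

end Binomial

namespace Nat

lemma cast_descFactorial_eq_prod_range (t k : ℕ) :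
    (t.descFactorial k : ℝ) = ∏ j ∈ range k, ((t : ℝ) - j) := by
  rw [← descPochhammer_eval_eq_descFactorial, descPochhammer_eval_eq_prod_range]

lemma descFactorial_div_pow_le_one (t k : ℕ) : (t.descFactorial k : ℝ) / t ^ k ≤ 1 :=
  div_le_one_of_le₀ (by exact_mod_cast t.descFactorial_le_pow k) (by positivity)

lemma descFactorial_div_pow_sub_le {t : ℕ} (ht : 0 < t) (k : ℕ) :
    (t.descFactorial k : ℝ) / t ^ k - k / t ≤ t.descFactorial (k + 1) / t ^ (k + 1) := by
  have hsucc : (t.descFactorial (k + 1) : ℝ) / t ^ (k + 1)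
      = t.descFactorial k / t ^ k - t.descFactorial k / t ^ k * (k / t) := by
    rw [cast_descFactorial_eq_prod_range, prod_range_succ, ← cast_descFactorial_eq_prod_range]
    field_simp
    ring
  have : (t.descFactorial k : ℝ) / t ^ k * (k / t) ≤ k / t :=
    mul_le_of_le_one_left (by positivity) (descFactorial_div_pow_le_one t k)
  linarith

lemma monotone_descFactorial_div_pow_add_choose_two {t : ℕ} (ht : 0 < t) :
    Monotone fun k : ℕ => (t.descFactorial k : ℝ) / t ^ k + k.choose 2 / t := by
  refine monotone_nat_of_le_succ fun k => ?_
  have hchoose : ((k + 1).choose 2 : ℝ) = k.choose 2 + k := by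
    rw [Nat.choose_succ_succ, Nat.choose_one_right, Nat.cast_add, add_comm]
  have := descFactorial_div_pow_sub_le ht k
  simp only [hchoose, add_div]
  linarith

lemma choose_mul_div_pow_mul_div_factorial (t k l : ℕ) (s c : ℝ) :
    (t.choose k : ℝ) * (s / t) ^ k * (c ^ l / l.factorial)
      = (k + l).choose k * s ^ k * c ^ l * (t.descFactorial k / t ^ k) / (k + l).factorial := by
  have hfact : ((k + l).factorial : ℝ) = (k + l).choose k * k.factorial * l.factorial := by
    exact_mod_cast (Nat.choose_mul_factorial_mul_factorial (Nat.le_add_right k l)).symm.trans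
      (by rw [Nat.add_sub_cancel_left])
  rw [descFactorial_eq_factorial_mul_choose, hfact]
  push_cast
  have : ((k + l).choose k : ℝ) ≠ 0 := by exact_mod_cast (Nat.choose_pos (Nat.le_add_right k l)).ne'
  field_simp
  rw [div_pow]
  ring

theorem sum_antidiagonal_choose_mul_pow_le {t : ℕ} (ht : 0 < t) {s c : ℝ} (hs : 0 ≤ s)
    (hc : 0 ≤ c) (hsc : s + c = 1) (r : ℕ) :
    ∑ p ∈ antidiagonal r, (t.choose p.1 : ℝ) * (s / t) ^ p.1 * (c ^ p.2 / p.2.factorial)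
      ≤ t.choose r / t ^ r + r.choose 2 * (1 - s ^ 2) / (t * r.factorial) := by
  set B : ℕ → ℝ := fun k => t.descFactorial k / t ^ k
  have hB : ∀ p ∈ antidiagonal r, B p.1 ≤ B r + (r.choose 2 - p.1.choose 2) / t := by
    intro p hp
    have := monotone_descFactorial_div_pow_add_choose_two ht
      (HasAntidiagonal.antidiagonal.fst_le hp)
    simp only [B, sub_div] at this ⊢
    linarith
  have hterm : ∀ p ∈ antidiagonal r, (t.choose p.1 : ℝ) * (s / t) ^ p.1 * (c ^ p.2 / p.2.factorial)
      = r.choose p.1 * s ^ p.1 * c ^ p.2 * B p.1 / r.factorial := by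
    intro p hp
    rw [choose_mul_div_pow_mul_div_factorial, mem_antidiagonal.1 hp]
  have hBr : (t.choose r : ℝ) / t ^ r = B r / r.factorial := by
    simp only [B, descFactorial_eq_factorial_mul_choose]
    push_cast
    field_simp
  rw [sum_congr rfl hterm, hBr]
  calc ∑ p ∈ antidiagonal r, (r.choose p.1 : ℝ) * s ^ p.1 * c ^ p.2 * B p.1 / r.factorial
      ≤ ∑ p ∈ antidiagonal r, (r.choose p.1 : ℝ) * s ^ p.1 * c ^ p.2
          * (B r + (r.choose 2 - p.1.choose 2) / t) / r.factorial := by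
        gcongr with p hp
        exact hB p hp
    _ = (B r + r.choose 2 / t) / r.factorial
          * ∑ p ∈ antidiagonal r, (r.choose p.1 : ℝ) * s ^ p.1 * c ^ p.2
        - 1 / (t * r.factorial)
          * ∑ p ∈ antidiagonal r, (p.1.choose 2 : ℝ) * r.choose p.1 * s ^ p.1 * c ^ p.2 := by
        rw [mul_sum, mul_sum, ← sum_sub_distrib]
        refine sum_congr rfl fun p _ => ?_
        field_simp
        ring
    _ = B r / r.factorial + r.choose 2 * (1 - s ^ 2) / (t * r.factorial) := by
        rw [sum_antidiagonal_choose_mul_pow, sum_antidiagonal_choose_two_mul_choose_mul_pow, hsc,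
          one_pow, one_pow]
        field_simp
        ring

lemma cast_choose_two_div_sq {t : ℕ} (ht : t ≠ 0) :
    (t.choose 2 : ℝ) / t ^ 2 = (t - 1) / (2 * t) := by
  rw [cast_choose_two]
  field_simp

lemma prod_Icc_sub_div_eq_choose_div {t r : ℕ} (ht : t ≠ 0) (hr : r ≠ 0) :
    (∏ i ∈ Icc 1 (r - 1), ((t : ℝ) - i)) / (r.factorial * (t : ℝ) ^ (r - 1))
      = t.choose r / t ^ r := by
  obtain ⟨q, rfl⟩ := exists_eq_add_one_of_ne_zero hr
  have hprod : (t : ℝ) * ∏ i ∈ Icc 1 q, ((t : ℝ) - i) = (q + 1).factorial * t.choose (q + 1) := by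
    rw [← Ico_add_one_right_eq_Icc, prod_Ico_eq_prod_range, ← cast_mul,
      ← descFactorial_eq_factorial_mul_choose, cast_descFactorial_eq_prod_range, prod_range_succ']
    simp [add_comm, mul_comm]
  rw [Nat.add_sub_cancel, div_eq_div_iff (by positivity) (by positivity)]
  linear_combination (t : ℝ) ^ q * hprod

end Nat

lemma choose_two_mul_div_sq_add_le {t r : ℕ} (ht : t ≠ 0) (hr : 2 ≤ r) {α s b : ℝ}
    (hα : α ≤ (t - 1) * (r - 2).factorial) (hs : s ^ 2 ≤ 1) :
    t.choose 2 * (s / t) ^ 2 + α * (b + r.choose 2 * (1 - s ^ 2) / (t * r.factorial))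
      ≤ t.choose 2 / t ^ 2 + α * b := by
  have hfact : (r.choose 2 : ℝ) * 2 * (r - 2).factorial = r.factorial := by
    exact_mod_cast Nat.choose_mul_factorial_mul_factorial hr
  have hrate : α * (r.choose 2 / (t * r.factorial)) ≤ t.choose 2 / t ^ 2 := by
    have hC : (0 : ℝ) < r.choose 2 := by exact_mod_cast Nat.choose_pos hr
    rw [Nat.cast_choose_two_div_sq ht, ← hfact, mul_div_assoc',
      div_le_div_iff₀ (by positivity) (by positivity)]
    nlinarith [mul_le_mul_of_nonneg_right hα (by positivity : (0 : ℝ) ≤ 2 * t * r.choose 2)]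
  calc t.choose 2 * (s / t) ^ 2 + α * (b + r.choose 2 * (1 - s ^ 2) / (t * r.factorial))
      = t.choose 2 / t ^ 2 * s ^ 2 + α * b + α * (r.choose 2 / (t * r.factorial)) * (1 - s ^ 2) := by
        ring
    _ ≤ t.choose 2 / t ^ 2 * s ^ 2 + α * b + t.choose 2 / t ^ 2 * (1 - s ^ 2) := by
        gcongr
    _ = t.choose 2 / t ^ 2 + α * b := by ring

namespace Finset

variable {ι R : Type*}

def esymm [CommSemiring R] (s : Finset ι) (x : ι → R) (k : ℕ) : R :=
  ∑ e ∈ s.powersetCard k, ∏ i ∈ e, x i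

section CommSemiring

variable [CommSemiring R] (x : ι → R)

@[simp]
lemma esymm_zero (s : Finset ι) : s.esymm x 0 = 1 := by
  simp [esymm]

@[simp]
lemma empty_esymm_succ (k : ℕ) : (∅ : Finset ι).esymm x (k + 1) = 0 := by
  rw [esymm, powersetCard_eq_empty.2 (by simp), sum_empty]

lemma esymm_insert_succ [DecidableEq ι] {a : ι} {s : Finset ι} (ha : a ∉ s) (k : ℕ) :
    (insert a s).esymm x (k + 1) = s.esymm x (k + 1) + x a * s.esymm x k := by
  have notMem {e : Finset ι} (he : e ∈ s.powersetCard k) : a ∉ e :=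
    fun h => ha ((mem_powersetCard.1 he).1 h)
  have hdisj : Disjoint (s.powersetCard (k + 1)) ((s.powersetCard k).image (insert a)) := by
    refine disjoint_left.2 fun e he he' => ?_
    obtain ⟨f, -, rfl⟩ := mem_image.1 he'
    exact ha ((mem_powersetCard.1 he).1 (mem_insert_self a f))
  have hinj : Set.InjOn (insert a) (s.powersetCard k : Set (Finset ι)) := fun e he f hf hef => by
    simpa [erase_insert (notMem he), erase_insert (notMem hf)] using congrArg (erase · a) hef
  rw [esymm, powersetCard_succ_insert ha, sum_union hdisj, sum_image hinj, esymm, esymm, mul_sum]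
  exact congrArg _ (sum_congr rfl fun e he => prod_insert (notMem he))

lemma esymm_union [DecidableEq ι] {s t : Finset ι} (hst : Disjoint s t) (k : ℕ) :
    (s ∪ t).esymm x k = ∑ p ∈ antidiagonal k, s.esymm x p.1 * t.esymm x p.2 := by
  induction t using Finset.induction_on generalizing k with
  | empty =>
    cases k with
    | zero => simp
    | succ k => simp [Nat.sum_antidiagonal_succ']
  | @insert a t ha ih =>
    have has : a ∉ s ∪ t := by
      simpa [ha] using (disjoint_insert_right.1 hst).1
    cases k with
    | zero => simp
    | succ k =>
      rw [union_insert, esymm_insert_succ x has, ih (disjoint_insert_right.1 hst).2,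
        ih (disjoint_insert_right.1 hst).2, Nat.sum_antidiagonal_succ', Nat.sum_antidiagonal_succ']
      simp only [esymm_zero, esymm_insert_succ x ha, mul_add, sum_add_distrib, mul_sum]
      rw [add_assoc]
      congr 2
      exact sum_congr rfl fun p _ => mul_left_comm _ _ _

end CommSemiring

variable {x : ι → ℝ}

lemma esymm_nonneg {s : Finset ι} (hx : ∀ i ∈ s, 0 ≤ x i) (k : ℕ) : 0 ≤ s.esymm x k :=
  sum_nonneg fun _ he => prod_nonneg fun i hi => hx i ((mem_powersetCard.1 he).1 hi)

lemma sum_prod_le_esymm_univ [Fintype ι] {E : Finset (Finset ι)} {k : ℕ} (hE : ∀ e ∈ E, #e = k)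
    (hx : ∀ i, 0 ≤ x i) : ∑ e ∈ E, ∏ i ∈ e, x i ≤ univ.esymm x k :=
  sum_le_sum_of_subset_of_nonneg (fun e he => mem_powersetCard.2 ⟨subset_univ e, hE e he⟩)
    fun _ _ _ => prod_nonneg fun i _ => hx i

variable [DecidableEq ι]

theorem esymm_le_choose_mul_pow {s : Finset ι} (hx : ∀ i ∈ s, 0 ≤ x i) (k : ℕ) :
    s.esymm x k ≤ (#s).choose k * ((∑ i ∈ s, x i) / #s) ^ k := by
  induction s using Finset.induction_on generalizing k with
  | empty => cases k <;> simp
  | @insert a s ha ih =>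
    cases k with
    | zero => simp
    | succ k =>
      have hx' : ∀ i ∈ s, 0 ≤ x i := fun i hi => hx i (mem_insert_of_mem hi)
      have hmean : 0 ≤ (∑ i ∈ s, x i) / #s := div_nonneg (sum_nonneg hx') (by positivity)
      have hsum : (#s : ℝ) * ((∑ i ∈ s, x i) / #s) = ∑ i ∈ s, x i := by
        rcases s.eq_empty_or_nonempty with rfl | hs
        · simp
        · exact mul_div_cancel₀ _ (by positivity)
      rw [esymm_insert_succ x ha, card_insert_of_notMem ha, sum_insert ha, Nat.cast_add_one,
        ← hsum]
      calc s.esymm x (k + 1) + x a * s.esymm x k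
          ≤ (#s).choose (k + 1) * ((∑ i ∈ s, x i) / #s) ^ (k + 1)
            + (#s).choose k * x a * ((∑ i ∈ s, x i) / #s) ^ k := by
            rw [mul_assoc _ (x a), mul_left_comm _ (x a)]
            gcongr
            · exact ih hx' _
            · exact hx a (mem_insert_self a s)
            · exact ih hx' _
        _ ≤ _ := choose_mul_pow_add_le hmean (hx a (mem_insert_self a s))

theorem esymm_le_pow_div_factorial {s : Finset ι} (hx : ∀ i ∈ s, 0 ≤ x i) (k : ℕ) :
    s.esymm x k ≤ (∑ i ∈ s, x i) ^ k / k.factorial := by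
  refine (esymm_le_choose_mul_pow hx k).trans ?_
  rcases s.eq_empty_or_nonempty with rfl | hs
  · cases k <;> simp
  have hcard : (0 : ℝ) < #s := by exact_mod_cast hs.card_pos
  calc ((#s).choose k : ℝ) * ((∑ i ∈ s, x i) / #s) ^ k
      ≤ (#s : ℝ) ^ k / k.factorial * ((∑ i ∈ s, x i) / #s) ^ k := by
        have := div_nonneg (sum_nonneg hx) hcard.le
        gcongr
        exact Nat.choose_le_pow_div k #s
    _ = (∑ i ∈ s, x i) ^ k / k.factorial := by
        rw [div_mul_eq_mul_div, ← mul_pow, mul_div_cancel₀ _ hcard.ne']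

theorem esymm_union_le {s t : Finset ι} (hst : Disjoint s t) (hx : ∀ i ∈ s ∪ t, 0 ≤ x i)
    (k : ℕ) :
    (s ∪ t).esymm x k ≤ ∑ p ∈ antidiagonal k,
      (#s).choose p.1 * ((∑ i ∈ s, x i) / #s) ^ p.1 * ((∑ i ∈ t, x i) ^ p.2 / p.2.factorial) := by
  have hxs : ∀ i ∈ s, 0 ≤ x i := fun i hi => hx i (mem_union_left t hi)
  have hxt : ∀ i ∈ t, 0 ≤ x i := fun i hi => hx i (mem_union_right s hi)
  have hmean : 0 ≤ (∑ i ∈ s, x i) / #s := div_nonneg (sum_nonneg hxs) (Nat.cast_nonneg _)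
  rw [esymm_union x hst]
  refine sum_le_sum fun p _ => ?_
  exact mul_le_mul (esymm_le_choose_mul_pow hxs _) (esymm_le_pow_div_factorial hxt _)
    (esymm_nonneg hxt _) (by positivity)

theorem esymm_univ_le [Fintype ι] {x : ι → ℝ} (hx : ∀ i, 0 ≤ x i) (hx1 : ∑ i, x i = 1)
    {W : Finset ι} (hW : W.Nonempty) (r : ℕ) :
    univ.esymm x r ≤ (#W).choose r / (#W : ℝ) ^ r
      + r.choose 2 * (1 - (∑ i ∈ W, x i) ^ 2) / (#W * r.factorial) := by
  have hcompl : ∑ i ∈ Wᶜ, x i = 1 - ∑ i ∈ W, x i := by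
    rw [← hx1, ← sum_compl_add_sum W]
    ring
  rw [← union_compl W]
  refine (esymm_union_le disjoint_compl_right (fun i _ => hx i) r).trans ?_
  rw [hcompl]
  exact Nat.sum_antidiagonal_choose_mul_pow_le hW.card_pos (sum_nonneg fun i _ => hx i)
    (by linarith [sum_le_univ_sum_of_nonneg (s := W) hx]) (add_sub_cancel _ _) r

lemma eq_powersetCard_two_of_card_biUnion_le {E : Finset (Finset ι)} {W : Finset ι}
    (hE : ∀ e ∈ E, #e = 2) (hWE : W.powersetCard 2 ⊆ E) (hcard : #(E.biUnion id) ≤ #W)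
    (hW : 2 ≤ #W) : E = W.powersetCard 2 := by
  have hsub : W ⊆ E.biUnion id := by
    rw [← powersetCard_biUnion two_ne_zero hW]
    exact biUnion_subset_biUnion_of_subset_left _ hWE
  have hcover : E.biUnion id = W := (eq_of_subset_of_card_le hsub hcard).symm
  refine (Subset.antisymm (fun e he => mem_powersetCard.2 ⟨?_, hE e he⟩) hWE)
  exact hcover ▸ subset_biUnion_of_mem id he

noncomputable def uniformWeight (W : Finset ι) (i : ι) : ℝ := if i ∈ W then (#W : ℝ)⁻¹ else 0

lemma sum_prod_uniformWeight {W : Finset ι} {E : Finset (Finset ι)} {k : ℕ}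
    (hWE : W.powersetCard k ⊆ E) (hE : ∀ e ∈ E, #e = k) :
    ∑ e ∈ E, ∏ i ∈ e, W.uniformWeight i = (#W).choose k / (#W : ℝ) ^ k := by
  have hterm : ∀ e ∈ W.powersetCard k, ∏ i ∈ e, W.uniformWeight i = (#W : ℝ)⁻¹ ^ k := by
    intro e he
    rw [mem_powersetCard] at he
    unfold uniformWeight
    rw [prod_congr rfl fun i hi => if_pos (he.1 hi), prod_const, he.2]
  rw [← sum_subset hWE, sum_congr rfl hterm, sum_const, card_powersetCard, nsmul_eq_mul,
    inv_pow, div_eq_mul_inv]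
  intro e he heW
  obtain ⟨i, hie, hiW⟩ := not_subset.1 fun h => heW (mem_powersetCard.2 ⟨h, hE e he⟩)
  exact prod_eq_zero hie (if_neg hiW)

lemma uniformWeight_mem_stdSimplex' {n : ℕ} {W : Finset (Fin n)} (hW : W.Nonempty) :
    W.uniformWeight ∈ stdSimplex' n := by
  refine ⟨fun i => ?_, ?_⟩
  · unfold uniformWeight
    split_ifs <;> positivity
  · have : (#W : ℝ) ≠ 0 := by exact_mod_cast hW.card_pos.ne'
    simp [uniformWeight, sum_ite_mem, this]

end Finset

theorem stmt_7_general (n r t : ℕ) (hr : 3 ≤ r) (αr : ℝ) (hαr : 0 < αr)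
    (E2 Er : Finset (Finset (Fin n)))
    (hE2 : ∀ e ∈ E2, e.card = 2) (hEr : ∀ e ∈ Er, e.card = r)
    (hcl : ∃ W : Finset (Fin n), W.card = t ∧ W.powersetCard 2 ⊆ E2 ∧ W.powersetCard r ⊆ Er)
    (hcover : (E2.biUnion id).card = t)
    (ht : (t : ℝ) ≥ αr / (Nat.factorial (r - 2)) + 1) :
    IsGreatest {y : ℝ | ∃ x ∈ stdSimplex' n,
        y = (∑ e ∈ E2, ∏ i ∈ e, x i) + αr * ∑ e ∈ Er, ∏ i ∈ e, x i}
      (((t : ℝ) - 1) / (2 * t)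
        + αr * (∏ i ∈ Finset.Icc 1 (r - 1), ((t : ℝ) - i)) / (Nat.factorial r * (t : ℝ) ^ (r - 1))) := by
  obtain ⟨W, rfl, hW2, hWr⟩ := hcl
  have hα : αr ≤ (#W - 1) * (r - 2).factorial := by
    rwa [ge_iff_le, ← le_sub_iff_add_le, div_le_iff₀ (by positivity)] at ht
  have hW : 2 ≤ #W := by
    have : (1 : ℝ) < #W := by linarith [div_pos hαr (show (0 : ℝ) < (r - 2).factorial by positivity)]
    exact_mod_cast this
  have hWne : W.Nonempty := card_pos.1 (by omega)
  have hE2W : E2 = W.powersetCard 2 := eq_powersetCard_two_of_card_biUnion_le hE2 hW2 hcover.le hW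
  rw [mul_div_assoc, Nat.prod_Icc_sub_div_eq_choose_div (by omega) (by omega),
    ← Nat.cast_choose_two_div_sq (by omega)]
  refine ⟨⟨W.uniformWeight, uniformWeight_mem_stdSimplex' hWne, ?_⟩, ?_⟩
  · rw [sum_prod_uniformWeight hW2 hE2, sum_prod_uniformWeight hWr hEr]
  rintro _ ⟨x, ⟨hx0, hx1⟩, rfl⟩
  set m := ∑ i ∈ W, x i
  have hm : m ^ 2 ≤ 1 :=
    pow_le_one₀ (sum_nonneg fun i _ => hx0 i) ((sum_le_univ_sum_of_nonneg hx0).trans hx1.le)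
  calc (∑ e ∈ E2, ∏ i ∈ e, x i) + αr * ∑ e ∈ Er, ∏ i ∈ e, x i
      ≤ (#W).choose 2 * (m / #W) ^ 2 + αr * univ.esymm x r := by
        gcongr
        · exact hE2W ▸ esymm_le_choose_mul_pow (fun i _ => hx0 i) 2
        · exact sum_prod_le_esymm_univ hEr hx0
    _ ≤ (#W).choose 2 * (m / #W) ^ 2 + αr * ((#W).choose r / (#W : ℝ) ^ r
          + r.choose 2 * (1 - m ^ 2) / (#W * r.factorial)) := by
        gcongr
        exact esymm_univ_le hx0 hx1 hWne r
    _ ≤ _ := choose_two_mul_div_sq_add_le (by omega) (by omega) hα hm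

/-- Theorem (a): a `{2,r}`-graph whose maximum complete `{2,r}`-subgraph and whose
set of vertices covered by the 2-edges both have order `t ≥ α_r/(r-2)! + 1`. -/
theorem stmt_7 (n r t : ℕ) (hr : 3 ≤ r) (αr : ℝ) (hαr : 0 < αr)
    (E2 Er : Finset (Finset (Fin n)))
    (hE2 : ∀ e ∈ E2, e.card = 2) (hEr : ∀ e ∈ Er, e.card = r)
    (hcl : ∃ W : Finset (Fin n), W.card = t ∧ W.powersetCard 2 ⊆ E2 ∧ W.powersetCard r ⊆ Er)
    (hmax : ∀ W : Finset (Fin n), W.powersetCard 2 ⊆ E2 → W.powersetCard r ⊆ Er → W.card ≤ t)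
    (hcover : (E2.biUnion id).card = t)
    (ht : (t : ℝ) ≥ αr / (Nat.factorial (r - 2)) + 1) :
    IsGreatest {y : ℝ | ∃ x ∈ stdSimplex' n,
        y = (∑ e ∈ E2, ∏ i ∈ e, x i) + αr * ∑ e ∈ Er, ∏ i ∈ e, x i}
      (((t : ℝ) - 1) / (2 * t)
        + αr * (∏ i ∈ Finset.Icc 1 (r - 1), ((t : ℝ) - i)) / (Nat.factorial r * (t : ℝ) ^ (r - 1))) :=
  stmt_7_general n r t hr αr hαr E2 Er hE2 hEr hcl hcover ht
end

section
/- (Left-compression does not decrease the objective) Let H = ([n], E) be a hypergraph, let 1 ≤ i < j ≤ n, and let x be a feasible weighting (a point of the standard simplex) with x_i ≥ x_j. Let H_{i←j} be the hypergraph with edge set C_{i←j}(E). Then L(H, x) ≤ L(H_{i←j}, x), where L is the weighted edge polynomial with positive coefficients α_k for each edge size k. -/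
open Finset

/-- Compression of a single edge: replace `j` by `i` if `i ∉ e` and `j ∈ e`. -/
def compressEdge {n : ℕ} (i j : Fin n) (e : Finset (Fin n)) : Finset (Fin n) :=
  if i ∉ e ∧ j ∈ e then insert i (e.erase j) else e

/-- Left-compression does not decrease the weighted edge polynomial, provided
`x i ≥ x j`. -/
theorem stmt_14 (n : ℕ) (E : Finset (Finset (Fin n))) (i j : Fin n) (hij : i < j)
    (α : ℕ → ℝ) (hα : ∀ k, 0 < α k)
    (x : Fin n → ℝ) (hx : x ∈ stdSimplex' n) (hxij : x j ≤ x i) :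
    (∑ e ∈ E, α e.card * ∏ v ∈ e, x v)
      ≤ ∑ e ∈ E.image (compressEdge i j) ∪ E.filter (fun e => compressEdge i j e ∈ E),
          α e.card * ∏ v ∈ e, x v := by
  classical
  set C : Finset (Fin n) → Finset (Fin n) := compressEdge i j with hC
  set w : Finset (Fin n) → ℝ := fun e => α e.card * ∏ v ∈ e, x v with hw
  have hx0 : ∀ v, 0 ≤ x v := hx.1
  have hw0 : ∀ e, 0 ≤ w e := fun e =>
    mul_nonneg (hα _).le (Finset.prod_nonneg fun v _ => hx0 v)
  -- for moved edges, compression has same card and i ∉ e, j ∈ e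
  have hmoved : ∀ e, (i ∉ e ∧ j ∈ e) → C e = insert i (e.erase j) := by
    intro e h; simp [hC, compressEdge, h]
  have hfix : ∀ e, ¬(i ∉ e ∧ j ∈ e) → C e = e := by
    intro e h; simp only [hC, compressEdge, if_neg h]
  have hwle : ∀ e, w e ≤ w (C e) := by
    intro e
    by_cases h : i ∉ e ∧ j ∈ e
    · have hCe := hmoved e h
      have hinotin : i ∉ e.erase j := fun hi => h.1 (Finset.mem_of_mem_erase hi)
      have hpos : 1 ≤ e.card := Finset.card_pos.mpr ⟨j, h.2⟩
      have hcard : (C e).card = e.card := by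
        rw [hCe, Finset.card_insert_of_notMem hinotin, Finset.card_erase_of_mem h.2]
        omega
      have hP : 0 ≤ ∏ v ∈ e.erase j, x v := Finset.prod_nonneg fun v _ => hx0 v
      have h1 : ∏ v ∈ C e, x v = x i * ∏ v ∈ e.erase j, x v := by
        rw [hCe, Finset.prod_insert hinotin]
      have h2 : ∏ v ∈ e, x v = x j * ∏ v ∈ e.erase j, x v := by
        rw [Finset.mul_prod_erase e x h.2]
      simp only [hw, hcard, h1, h2]
      have := mul_le_mul_of_nonneg_right hxij hP
      nlinarith [(hα e.card)]
    · rw [hfix e h]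
  -- split E
  have hsplit := Finset.sum_filter_add_sum_filter_not E (fun e => C e ∈ E) w
  set A := E.filter (fun e => C e ∈ E) with hA
  set D := E.filter (fun e => C e ∉ E) with hD
  -- edges in D are moved
  have hDmoved : ∀ e ∈ D, i ∉ e ∧ j ∈ e := by
    intro e he
    rw [hD, Finset.mem_filter] at he
    by_contra h
    exact he.2 (by rw [hfix e h]; exact he.1)
  have hinj : ∀ e₁ ∈ D, ∀ e₂ ∈ D, C e₁ = C e₂ → e₁ = e₂ := by
    intro e₁ h₁ e₂ h₂ heq
    obtain ⟨hi₁, hj₁⟩ := hDmoved e₁ h₁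
    obtain ⟨hi₂, hj₂⟩ := hDmoved e₂ h₂
    rw [hmoved e₁ ⟨hi₁, hj₁⟩, hmoved e₂ ⟨hi₂, hj₂⟩] at heq
    have hi₁' : i ∉ e₁.erase j := fun hh => hi₁ (Finset.mem_of_mem_erase hh)
    have hi₂' : i ∉ e₂.erase j := fun hh => hi₂ (Finset.mem_of_mem_erase hh)
    have : e₁.erase j = e₂.erase j := by
      have := congrArg (fun s => Finset.erase s i) heq
      simpa [Finset.erase_insert hi₁', Finset.erase_insert hi₂'] using this
    calc e₁ = insert j (e₁.erase j) := (Finset.insert_erase hj₁).symm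
      _ = insert j (e₂.erase j) := by rw [this]
      _ = e₂ := Finset.insert_erase hj₂
  have hsum_img : ∑ e ∈ D.image C, w e = ∑ e ∈ D, w (C e) :=
    Finset.sum_image hinj
  -- A and D.image C are disjoint subsets of the target
  have hdisj : Disjoint A (D.image C) := by
    rw [Finset.disjoint_right]
    intro e he heA
    obtain ⟨d, hd, rfl⟩ := Finset.mem_image.mp he
    rw [hD, Finset.mem_filter] at hd
    rw [hA, Finset.mem_filter] at heA
    exact hd.2 heA.1
  have hsubset : A ∪ D.image C ⊆ E.image C ∪ A := by
    intro e he
    rcases Finset.mem_union.mp he with h | h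
    · exact Finset.mem_union_right _ h
    · refine Finset.mem_union_left _ ?_
      exact Finset.image_subset_image (by rw [hD]; exact Finset.filter_subset _ _) h
  have hbound : ∑ e ∈ A ∪ D.image C, w e ≤ ∑ e ∈ E.image C ∪ A, w e :=
    Finset.sum_le_sum_of_subset_of_nonneg hsubset (fun e _ _ => hw0 e)
  have hAD : ∑ e ∈ A ∪ D.image C, w e = ∑ e ∈ A, w e + ∑ e ∈ D.image C, w e :=
    Finset.sum_union hdisj
  have hDle : ∑ e ∈ D, w e ≤ ∑ e ∈ D, w (C e) :=
    Finset.sum_le_sum fun e _ => hwle e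
  calc ∑ e ∈ E, w e = ∑ e ∈ A, w e + ∑ e ∈ D, w e := by
        rw [← hsplit]
      _ ≤ ∑ e ∈ A, w e + ∑ e ∈ D, w (C e) := by linarith
      _ = ∑ e ∈ A ∪ D.image C, w e := by rw [hAD, hsum_img]
      _ ≤ ∑ e ∈ E.image C ∪ A, w e := hbound
end

section
/- (Support is pairwise covered) Let H be a hypergraph on [n] and let x with x_1 ≥ … ≥ x_k > x_{k+1} = … = x_n = 0 be a maximizer of L(H, ·) over the standard simplex with minimal support size among all maximizers. Then for every pair 1 ≤ i < j ≤ k there exists an edge e ∈ E(H) with {i, j} ⊆ e. -/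
/-!
If no edge contains both `i` and `j`, every monomial of `L` involves at most one of `x i`, `x j`,
so `L` is affine along the segment that moves mass between `i` and `j` inside the simplex. A
maximizer with `x i, x j > 0` lies in the interior of that segment, so `L` is constant on it.
Moving all of `x j` onto `i` then gives a maximizer with smaller support.
-/

open Finset

section PairShift

variable {ι : Type*} [DecidableEq ι] {i j : ι}

def pairShift (x : ι → ℝ) (i j : ι) (t : ℝ) : ι → ℝ :=
  x + t • (Pi.single i 1 - Pi.single j 1)

lemma pairShift_apply (x : ι → ℝ) (t : ℝ) (v : ι) :
    pairShift x i j t v = x v + t * ((Pi.single i 1 : ι → ℝ) v - (Pi.single j 1 : ι → ℝ) v) := rfl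

lemma pairShift_apply_left (hij : i ≠ j) (x : ι → ℝ) (t : ℝ) :
    pairShift x i j t i = x i + t := by
  simp [pairShift_apply, hij]

lemma pairShift_apply_right (hij : i ≠ j) (x : ι → ℝ) (t : ℝ) :
    pairShift x i j t j = x j - t := by
  rw [pairShift_apply, Pi.single_eq_of_ne hij.symm, Pi.single_eq_same]
  ring

lemma pairShift_apply_of_ne {v : ι} (hvi : v ≠ i) (hvj : v ≠ j) (x : ι → ℝ) (t : ℝ) :
    pairShift x i j t v = x v := by
  simp [pairShift_apply, hvi, hvj]

lemma pairShift_swap (x : ι → ℝ) (t : ℝ) : pairShift x i j t = pairShift x j i (-t) := by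
  ext v; simp only [pairShift_apply]; ring

lemma sum_pairShift [Fintype ι] (x : ι → ℝ) (t : ℝ) : ∑ v, pairShift x i j t v = ∑ v, x v := by
  simp [pairShift_apply, sum_add_distrib, ← mul_sum, sum_sub_distrib]

lemma prod_pairShift_of_mem_of_notMem {e : Finset ι} (hi : i ∈ e) (hj : j ∉ e)
    (x : ι → ℝ) (t : ℝ) :
    ∏ v ∈ e, pairShift x i j t v = (x i + t) * ∏ v ∈ e.erase i, x v := by
  have hij : i ≠ j := fun h => hj (h ▸ hi)
  rw [← mul_prod_erase e _ hi, pairShift_apply_left hij]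
  congr 1
  refine prod_congr rfl fun v hv => pairShift_apply_of_ne (ne_of_mem_erase hv) ?_ x t
  rintro rfl
  exact hj (mem_of_mem_erase hv)

lemma exists_prod_pairShift_eq_add_mul {e : Finset ι} (he : ¬(i ∈ e ∧ j ∈ e)) (x : ι → ℝ) :
    ∃ c, ∀ t, ∏ v ∈ e, pairShift x i j t v = ∏ v ∈ e, x v + c * t := by
  by_cases hi : i ∈ e
  · have hj : j ∉ e := fun hj => he ⟨hi, hj⟩
    refine ⟨∏ v ∈ e.erase i, x v, fun t => ?_⟩
    rw [prod_pairShift_of_mem_of_notMem hi hj, ← mul_prod_erase e x hi]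
    ring
  by_cases hj : j ∈ e
  · refine ⟨-∏ v ∈ e.erase j, x v, fun t => ?_⟩
    rw [pairShift_swap, prod_pairShift_of_mem_of_notMem hj hi, ← mul_prod_erase e x hj]
    ring
  · refine ⟨0, fun t => ?_⟩
    rw [zero_mul, add_zero]
    exact prod_congr rfl fun v hv =>
      pairShift_apply_of_ne (ne_of_mem_of_not_mem hv hi) (ne_of_mem_of_not_mem hv hj) x t

lemma exists_sum_prod_pairShift_eq_add_mul (E : Finset (Finset ι)) (w : Finset ι → ℝ)
    (hE : ∀ e ∈ E, i ∈ e → j ∉ e) (x : ι → ℝ) :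
    ∃ c, ∀ t, ∑ e ∈ E, w e * ∏ v ∈ e, pairShift x i j t v
      = ∑ e ∈ E, w e * ∏ v ∈ e, x v + c * t := by
  have : ∀ e, ∃ c, e ∈ E → ∀ t, ∏ v ∈ e, pairShift x i j t v = ∏ v ∈ e, x v + c * t := by
    intro e
    by_cases he : e ∈ E
    · obtain ⟨c, hc⟩ := exists_prod_pairShift_eq_add_mul (fun h => hE e he h.1 h.2) x
      exact ⟨c, fun _ => hc⟩
    · exact ⟨0, fun h => absurd h he⟩
  choose c hc using this
  refine ⟨∑ e ∈ E, w e * c e, fun t => ?_⟩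
  rw [sum_mul, ← sum_add_distrib]
  exact sum_congr rfl fun e he => by rw [hc e he]; ring

lemma card_support_pairShift_lt [Fintype ι] {x : ι → ℝ} (hij : i ≠ j) (hxi : x i ≠ 0)
    (hxj : x j ≠ 0) :
    #{v | pairShift x i j (x j) v ≠ 0} < #{v | x v ≠ 0} := by
  have hsub : ({v | pairShift x i j (x j) v ≠ 0} : Finset ι)
      ⊆ ({v | x v ≠ 0} : Finset ι).erase j := by
    intro v hv
    simp only [mem_filter, mem_univ, true_and] at hv
    have hvj : v ≠ j := by rintro rfl; exact hv (by rw [pairShift_apply_right hij, sub_self])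
    refine mem_erase.2 ⟨hvj, ?_⟩
    by_cases hvi : v = i
    · subst hvi; simpa using hxi
    · simpa [pairShift_apply_of_ne hvi hvj] using hv
  calc _ ≤ _ := card_le_card hsub
    _ < _ := card_erase_lt_of_mem (by simpa using hxj)

end PairShift

lemma pairShift_mem_stdSimplex' {n : ℕ} {x : Fin n → ℝ} (hx : x ∈ stdSimplex' n) {i j : Fin n}
    (hij : i ≠ j) {t : ℝ} (hti : -x i ≤ t) (htj : t ≤ x j) :
    pairShift x i j t ∈ stdSimplex' n := by
  refine ⟨fun v => ?_, (sum_pairShift x t).trans hx.2⟩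
  by_cases hvi : v = i
  · subst hvi; rw [pairShift_apply_left hij]; linarith
  by_cases hvj : v = j
  · subst hvj; rw [pairShift_apply_right hij]; linarith
  · rw [pairShift_apply_of_ne hvi hvj]; exact hx.1 v

lemma card_support_le_of_eq_zero {n k : ℕ} {x : Fin n → ℝ}
    (hzero : ∀ i : Fin n, k ≤ (i : ℕ) → x i = 0) : #{i | x i ≠ 0} ≤ k := by
  calc #{i | x i ≠ 0} ≤ #{i : Fin n | (i : ℕ) < k} :=
        card_le_card fun i hi => by
          simp only [mem_filter, mem_univ, true_and] at hi ⊢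
          exact lt_of_not_ge fun h => hi (hzero i h)
    _ ≤ k := by rw [Fin.card_filter_val_lt]; exact min_le_right n k

theorem stmt_16_general (n k : ℕ) (E : Finset (Finset (Fin n)))
    (α : ℕ → ℝ)
    (x : Fin n → ℝ) (hx : x ∈ stdSimplex' n)
    (hpos : ∀ i : Fin n, (i : ℕ) < k → 0 < x i)
    (hzero : ∀ i : Fin n, k ≤ (i : ℕ) → x i = 0)
    (hmax : ∀ y ∈ stdSimplex' n,
      (∑ e ∈ E, α e.card * ∏ v ∈ e, y v) ≤ ∑ e ∈ E, α e.card * ∏ v ∈ e, x v)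
    (hminsupp : ∀ y ∈ stdSimplex' n,
      (∑ e ∈ E, α e.card * ∏ v ∈ e, y v) = (∑ e ∈ E, α e.card * ∏ v ∈ e, x v) →
      k ≤ ((univ : Finset (Fin n)).filter (fun i => y i ≠ 0)).card) :
    ∀ i j : Fin n, i < j → (j : ℕ) < k → ∃ e ∈ E, i ∈ e ∧ j ∈ e := by
  intro i j hij hjk
  by_contra! hE
  have hxi : 0 < x i := hpos i (lt_trans hij hjk)
  have hxj : 0 < x j := hpos j hjk
  obtain ⟨c, hc⟩ := exists_sum_prod_pairShift_eq_add_mul E (fun e => α e.card) hE x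
  have hmem : ∀ t, -x i ≤ t → t ≤ x j → pairShift x i j t ∈ stdSimplex' n :=
    fun t => pairShift_mem_stdSimplex' hx hij.ne
  have hforward := hmax _ (hmem (x j) (by linarith) le_rfl)
  have hbackward := hmax _ (hmem (-x i) le_rfl (by linarith))
  rw [hc] at hforward hbackward
  have hc0 : c = 0 := by nlinarith
  have hk := hminsupp _ (hmem (x j) (by linarith) le_rfl) (by rw [hc, hc0, zero_mul, add_zero])
  have hsmaller := card_support_pairShift_lt hij.ne hxi.ne' hxj.ne'
  have hsupp := card_support_le_of_eq_zero hzero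
  omega

/-- A maximizer with minimal support has its support pairwise covered by edges. -/
theorem stmt_16 (n k : ℕ) (E : Finset (Finset (Fin n)))
    (α : ℕ → ℝ) (hα : ∀ m, 0 < α m)
    (x : Fin n → ℝ) (hx : x ∈ stdSimplex' n)
    (hsort : ∀ i j : Fin n, i ≤ j → x j ≤ x i)
    (hpos : ∀ i : Fin n, (i : ℕ) < k → 0 < x i)
    (hzero : ∀ i : Fin n, k ≤ (i : ℕ) → x i = 0)
    (hmax : ∀ y ∈ stdSimplex' n,
      (∑ e ∈ E, α e.card * ∏ v ∈ e, y v) ≤ ∑ e ∈ E, α e.card * ∏ v ∈ e, x v)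
    (hminsupp : ∀ y ∈ stdSimplex' n,
      (∑ e ∈ E, α e.card * ∏ v ∈ e, y v) = (∑ e ∈ E, α e.card * ∏ v ∈ e, x v) →
      k ≤ ((univ : Finset (Fin n)).filter (fun i => y i ≠ 0)).card) :
    ∀ i j : Fin n, i < j → (j : ℕ) < k → ∃ e ∈ E, i ∈ e ∧ j ∈ e :=
  stmt_16_general n k E α x hx hpos hzero hmax hminsupp
end
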